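/- Let H be a finite-dimensional complex inner product space and let {d_{ik}} (i ranging over a finite index set, 1 ≤ k ≤ m_i) be an orthonormal basis of H. For vectors φ_{iks} ∈ H define A_{is} = ∑_{k=1}^{m_i} |φ_{iks}⟩⟨d_{ik}|, the projections P_i = ∑_{k=1}^{m_i} |d_{ik}⟩⟨d_{ik}|, and Φ(B) = ∑_{i,s} A_{is}* B A_{is}. Then for every operator B on H and every i, Φ(B) commutes with P_i, i.e. Φ(B) P_i = P_i Φ(B). -/

import Mathlib

/-- The rank-one operator `|u⟩⟨v| : ψ ↦ ⟨v, ψ⟩ u` (inner product conjugate-linear in the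
first argument, linear in the second). -/
noncomputable def rankOne {H : Type*} [NormedAddCommGroup H] [InnerProductSpace ℂ H]
    (u v : H) : H →ₗ[ℂ] H where
  toFun ψ := (inner ℂ v ψ : ℂ) • u
  map_add' x y := by simp [inner_add_right, add_smul]
  map_smul' c x := by simp [inner_smul_right, smul_smul]

/-!
Each Kraus operator `A_{js}` only reads the `d_{jk}`-coordinates, so by orthonormality
`A_{js} P_i = δ_{ij} A_{js}`. Since `P_i` is self-adjoint, `P_i A_{js}* = (A_{js} P_i)*`, hence
both `A_{js}* B A_{js} P_i` and `P_i A_{js}* B A_{js}` equal `δ_{ij} A_{js}* B A_{js}`: every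
term of `Φ(B)` commutes with `P_i`.
-/

section RankOne

variable {H : Type*} [NormedAddCommGroup H] [InnerProductSpace ℂ H]

theorem rankOne_apply (u v ψ : H) : rankOne u v ψ = (inner ℂ v ψ : ℂ) • u := rfl

theorem rankOne_comp_rankOne (u v x y : H) :
    rankOne u v ∘ₗ rankOne x y = (inner ℂ v x : ℂ) • rankOne u y := by
  ext ψ
  simp [rankOne_apply, smul_smul, mul_comm]

theorem adjoint_rankOne [FiniteDimensional ℂ H] (u v : H) :
    LinearMap.adjoint (rankOne u v) = rankOne v u := by
  refine ((LinearMap.eq_adjoint_iff _ _).mpr fun x y => ?_).symm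
  simp [rankOne_apply, inner_smul_left, inner_smul_right, mul_comm]

theorem adjoint_sum_rankOne_self [FiniteDimensional ℂ H] {κ : Type*} (s : Finset κ)
    (w : κ → H) :
    LinearMap.adjoint (∑ k ∈ s, rankOne (w k) (w k)) = ∑ k ∈ s, rankOne (w k) (w k) := by
  simp only [map_sum, adjoint_rankOne]

theorem sum_rankOne_comp_sum_rankOne_self_of_orthonormal {ι : Type*} {κ : ι → Type*}
    [DecidableEq ι] [∀ i, Fintype (κ i)] {v : (Σ i, κ i) → H} (hv : Orthonormal ℂ v) {j : ι}
    (φ : κ j → H) (i : ι) :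
    (∑ k, rankOne (φ k) (v ⟨j, k⟩)) ∘ₗ ∑ l, rankOne (v ⟨i, l⟩) (v ⟨i, l⟩)
      = if j = i then ∑ k, rankOne (φ k) (v ⟨j, k⟩) else 0 := by
  classical
  have hv' := orthonormal_iff_ite.mp hv
  simp only [← Module.End.mul_eq_comp, Finset.sum_mul, Finset.mul_sum]
  simp only [Module.End.mul_eq_comp, rankOne_comp_rankOne, hv', Sigma.mk.inj_iff]
  split_ifs with hji
  · subst hji
    simp
  · simp [hji]

end RankOne

theorem LinearMap.commute_adjoint_mul_mul_self {𝕜 E : Type*} [RCLike 𝕜]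
    [NormedAddCommGroup E] [InnerProductSpace 𝕜 E] [FiniteDimensional 𝕜 E]
    {A P : E →ₗ[𝕜] E} (hP : LinearMap.adjoint P = P) (hA : A * P = A ∨ A * P = 0)
    (B : E →ₗ[𝕜] E) : Commute (LinearMap.adjoint A * B * A) P := by
  have hPA : P * LinearMap.adjoint A = LinearMap.adjoint (A * P) := by
    rw [Module.End.mul_eq_comp A, LinearMap.adjoint_comp, hP, Module.End.mul_eq_comp]
  change _ * P = P * _
  rw [mul_assoc, ← mul_assoc P, ← mul_assoc P, hPA]
  rcases hA with h | h <;> simp [h, mul_assoc]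

/-- STATEMENT 5: for a PVM `P_i = ∑_k |d_{ik}⟩⟨d_{ik}|` coming from an orthonormal
basis `{d_{ik}}` and an instrument with Kraus operators `A_{is} = ∑_k |φ_{iks}⟩⟨d_{ik}|`
and total channel `Φ(B) = ∑_{i,s} A_{is}* B A_{is}`, the total channel output `Φ(B)` commutes
with each `P_i`: `Φ(B) P_i = P_i Φ(B)`. -/
theorem stmt_6 {H : Type*} [NormedAddCommGroup H] [InnerProductSpace ℂ H]
    [FiniteDimensional ℂ H] {ι : Type*} [Fintype ι] (m r : ι → ℕ)
    (b : OrthonormalBasis (Σ i : ι, Fin (m i)) ℂ H)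
    (φ : (i : ι) → Fin (m i) → Fin (r i) → H)
    (A : (i : ι) → Fin (r i) → (H →ₗ[ℂ] H))
    (hA : ∀ i s, A i s = ∑ k : Fin (m i), rankOne (φ i k s) (b ⟨i, k⟩))
    (P : ι → (H →ₗ[ℂ] H))
    (hP : ∀ i, P i = ∑ k : Fin (m i), rankOne (b ⟨i, k⟩) (b ⟨i, k⟩))
    (Φ : (H →ₗ[ℂ] H) → (H →ₗ[ℂ] H))
    (hΦ : ∀ B, Φ B = ∑ i : ι, ∑ s : Fin (r i),
      LinearMap.adjoint (A i s) ∘ₗ B ∘ₗ A i s)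
    (B : H →ₗ[ℂ] H) (i : ι) :
    Φ B ∘ₗ P i = P i ∘ₗ Φ B := by
  classical
  have hPi : LinearMap.adjoint (P i) = P i := by
    rw [hP]
    exact adjoint_sum_rankOne_self _ _
  have hAP (j : ι) (s : Fin (r j)) : A j s * P i = A j s ∨ A j s * P i = 0 := by
    have h := sum_rankOne_comp_sum_rankOne_self_of_orthonormal b.orthonormal (φ j · s) i
    rw [← hA, ← hP] at h
    change A j s * P i = _ at h
    split_ifs at h
    exacts [.inl h, .inr h]
  rw [hΦ]
  exact (Commute.sum_left _ _ _ fun j _ => Commute.sum_left _ _ _ fun s _ =>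
    LinearMap.commute_adjoint_mul_mul_self hPi (hAP j s) B).eq
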